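/- Let m be a positive integer such that q = 2m² + 2m + 1 is a prime power, and let C := C_0^{(2,q)} be the set of nonzero squares of F_q. Suppose D₀, D₁ ⊆ F_q satisfy |D₀| = m², |D₁| = m² + m + 1, and for every j ∈ F_q: |D₀ ∩ ((C∪{0}) + j)| + |D₁ ∩ (C + j)| ∈ {m², m²+1, m²+m+1, m²+m+2} and |D₀ ∩ (C + j)| + |D₁ ∩ ((F_q∖(C∪{0})) + j)| ∈ {m²−1, m², m²+m, m²+m+1}. Then there exists an Hadamard matrix of order n = 4(m² + m + 1) each of whose row sums equals either 2m or 2m + 4. -/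

import Mathlib

/-!
Write `χ` for the quadratic character of `F_q`, `q = 2m² + 2m + 1 ≡ 1 (mod 4)`. Bordering the
Jacobsthal matrix `(χ(b - a))` by ones gives the symmetric Paley conference matrix `K`,
`K² = q I`, so `M = [[K + I, K - I], [K - I, -K - I]]` is a Hadamard matrix of order `2(q + 1)`.
Off the border, the rows of `K + I`, `K - I`, `-K - I` are the `±1` patterns of the translates
`(C ∪ {0}) + a`, `C + a`, `N + a` (`N` the nonsquares). Negating the columns indexed by `D₀` in
the first block column and by `D₁` in the second makes the row sums
`2 + 2(|D₀| + |D₁|) - 4(|D₀ ∩ ((C ∪ {0}) + a)| + |D₁ ∩ (C + a)|)` and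
`2(|D₀| + |D₁|) - 2 - 4(|D₀ ∩ (C + a)| + |D₁ ∩ (N + a)|)`; the hypotheses force these into
`±2m, ±(2m + 4)`, and the border rows sum to `2m`. Finally negate the rows with negative sum.
-/

open Finset Matrix

namespace Matrix

variable {n : Type*} [Fintype n] [DecidableEq n]

section Doubling

variable {R : Type*} [CommRing R] {K : Matrix n n R}

def conferenceDoubling (K : Matrix n n R) : Matrix (n ⊕ n) (n ⊕ n) R :=
  fromBlocks (K + 1) (K - 1) (K - 1) (-K - 1)

omit [Fintype n] in
theorem conferenceDoubling_apply_eq_one_or (hdiag : ∀ i, K i i = 0)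
    (hoff : ∀ i j, i ≠ j → K i j = 1 ∨ K i j = -1) (i j : n ⊕ n) :
    conferenceDoubling K i j = 1 ∨ conferenceDoubling K i j = -1 := by
  rcases i with i | i <;> rcases j with j | j <;>
  · obtain rfl | hij := eq_or_ne i j
    · simp [conferenceDoubling, hdiag]
    · rcases hoff i j hij with h | h <;> simp [conferenceDoubling, one_apply_ne hij, h]

omit [Fintype n] in
theorem conferenceDoubling_transpose (hK : Kᵀ = K) :
    (conferenceDoubling K)ᵀ = conferenceDoubling K := by
  simp [conferenceDoubling, fromBlocks_transpose, hK]

theorem conferenceDoubling_mul_self {c : R} (hKK : K * K = c • 1) :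
    conferenceDoubling K * conferenceDoubling K = (2 * (c + 1)) • 1 := by
  simp only [conferenceDoubling, fromBlocks_multiply, ← fromBlocks_one, fromBlocks_smul,
    smul_zero]
  congr 1 <;> simp only [add_mul, mul_add, sub_mul, mul_sub, neg_mul, mul_neg, hKK, mul_one,
    one_mul] <;> module

end Doubling

theorem isHadamard_conferenceDoubling {K : Matrix n n ℤ} (hK : Kᵀ = K)
    (hdiag : ∀ i, K i i = 0) (hoff : ∀ i j, i ≠ j → K i j = 1 ∨ K i j = -1)
    (hKK : K * K = ((Fintype.card n : ℤ) - 1) • 1) :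
    IsHadamard (conferenceDoubling K) := by
  have hM : conferenceDoubling K * (conferenceDoubling K)ᴴ =
      (Fintype.card (n ⊕ n) : ℤ) • 1 := by
    rw [conjTranspose_eq_transpose_of_trivial, conferenceDoubling_transpose hK,
      conferenceDoubling_mul_self hKK, Fintype.card_sum]
    push_cast
    ring_nf
  refine ⟨fun i j => Unitary.mem_iff_eq_one_or_eq_neg_one.2
    (conferenceDoubling_apply_eq_one_or hdiag hoff i j), hM, ?_⟩
  rwa [conjTranspose_eq_transpose_of_trivial, conferenceDoubling_transpose hK] at hM ⊢

theorem IsHadamard.diagonal_mul_mul_diagonal {R : Type*} [CommRing R] [StarRing R]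
    {H : Matrix n n R} (hH : IsHadamard H) {r c : n → R} (hr : ∀ i, r i ∈ unitary R)
    (hc : ∀ j, c j ∈ unitary R) : IsHadamard (diagonal r * H * diagonal c) := by
  have hmul_star {v : n → R} (hv : ∀ i, v i ∈ unitary R) :
      diagonal v * (diagonal v)ᴴ = 1 := by
    rw [diagonal_conjTranspose, diagonal_mul_diagonal, ← diagonal_one]
    exact congrArg diagonal (funext fun i => Unitary.mul_star_self_of_mem (hv i))
  have hstar_mul {v : n → R} (hv : ∀ i, v i ∈ unitary R) :
      (diagonal v)ᴴ * diagonal v = 1 := by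
    rw [diagonal_conjTranspose, diagonal_mul_diagonal, ← diagonal_one]
    exact congrArg diagonal (funext fun i => Unitary.star_mul_self_of_mem (hv i))
  refine ⟨fun i j => ?_, ?_, ?_⟩
  · rw [mul_diagonal, diagonal_mul]
    exact mul_mem (mul_mem (hr i) (hH.apply_mem i j)) (hc j)
  · calc diagonal r * H * diagonal c * (diagonal r * H * diagonal c)ᴴ
        = diagonal r * (H * (diagonal c * (diagonal c)ᴴ) * Hᴴ) * (diagonal r)ᴴ := by
          simp only [Matrix.conjTranspose_mul, Matrix.mul_assoc]
      _ = (Fintype.card n : R) • 1 := by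
          rw [hmul_star hc, Matrix.mul_one, hH.mul_conjTranspose, Matrix.mul_smul, Matrix.mul_one,
            Matrix.smul_mul, hmul_star hr]
  · calc (diagonal r * H * diagonal c)ᴴ * (diagonal r * H * diagonal c)
        = (diagonal c)ᴴ * (Hᴴ * ((diagonal r)ᴴ * diagonal r) * H) * diagonal c := by
          simp only [Matrix.conjTranspose_mul, Matrix.mul_assoc]
      _ = (Fintype.card n : R) • 1 := by
          rw [hstar_mul hr, Matrix.mul_one, hH.conjTranspose_mul, Matrix.mul_smul, Matrix.mul_one,
            Matrix.smul_mul, hstar_mul hc]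

/-- Negate the columns where `c = -1`, then every row with negative sum. -/
theorem IsHadamard.exists_sum_eq_abs_mulVec {H : Matrix n n ℤ} (hH : IsHadamard H) {c : n → ℤ}
    (hc : ∀ j, c j = 1 ∨ c j = -1) :
    ∃ H' : Matrix n n ℤ, IsHadamard H' ∧ ∀ i, ∑ j, H' i j = |(H *ᵥ c) i| := by
  set r : n → ℤ := fun i => if 0 ≤ (H *ᵥ c) i then 1 else -1
  have hr (i : n) : r i ∈ unitary ℤ := Unitary.mem_iff_eq_one_or_eq_neg_one.2 <| by
    by_cases h : 0 ≤ (H *ᵥ c) i <;> simp [r, h]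
  refine ⟨diagonal r * H * diagonal c, hH.diagonal_mul_mul_diagonal hr
    (fun j => Unitary.mem_iff_eq_one_or_eq_neg_one.2 (hc j)), fun i => ?_⟩
  simp only [mul_diagonal, diagonal_mul, mul_assoc, ← mul_sum]
  change r i * (H *ᵥ c) i = _
  by_cases h : 0 ≤ (H *ᵥ c) i
  · simp [r, h, abs_of_nonneg h]
  · simp [r, h, abs_of_neg (not_le.1 h)]

theorem IsHadamard.exists_fin {ι : Type*} [Fintype ι] [DecidableEq ι] {H : Matrix ι ι ℤ}
    (hH : IsHadamard H) {N : ℕ} (hN : Fintype.card ι = N) {P : ℤ → Prop}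
    (hP : ∀ i, P (∑ j, H i j)) :
    ∃ H' : Matrix (Fin N) (Fin N) ℤ, (∀ i j, H' i j = 1 ∨ H' i j = -1) ∧
      H' * H'ᵀ = (N : ℤ) • 1 ∧ ∀ i, P (∑ j, H' i j) := by
  set e := Fintype.equivFinOfCardEq hN
  have hH' := hH.reindex e e
  refine ⟨Matrix.reindex e e H,
    fun i j => Unitary.mem_iff_eq_one_or_eq_neg_one.1 (hH'.apply_mem i j),
    by simpa [conjTranspose_eq_transpose_of_trivial] using hH'.mul_conjTranspose, fun i => ?_⟩
  rw [show ∑ j, Matrix.reindex e e H i j = ∑ j, H (e.symm i) j from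
    e.symm.sum_comp (H (e.symm i))]
  exact hP _

end Matrix

section Counting

variable {α : Type*} [Fintype α]

theorem sum_ite_mem_eq_ncard (S : Set α) [DecidablePred (· ∈ S)] :
    ∑ b, (if b ∈ S then (1 : ℤ) else 0) = S.ncard := by
  rw [sum_boole, Set.ncard_eq_toFinset_card']
  congr
  ext
  simp

open Classical in
theorem sum_sign_mul_sign (T D : Set α) :
    ∑ b, (if b ∈ T then (1 : ℤ) else -1) * (if b ∈ D then -1 else 1) =
      ∑ b, (if b ∈ T then (1 : ℤ) else -1) + 2 * D.ncard - 4 * (D ∩ T).ncard := by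
  have hpt (b : α) : (if b ∈ T then (1 : ℤ) else -1) * (if b ∈ D then -1 else 1) =
      (if b ∈ T then 1 else -1) + 2 * (if b ∈ D then 1 else 0) -
        4 * (if b ∈ D ∩ T then 1 else 0) := by
    by_cases hT : b ∈ T <;> by_cases hD : b ∈ D <;> simp [hT, hD]
  simp only [hpt, sum_add_distrib, sum_sub_distrib, ← mul_sum, sum_ite_mem_eq_ncard]

end Counting

theorem mem_image_add_right_iff {G : Type*} [AddGroup G] {S : Set G} {a b : G} :
    b ∈ (· + a) '' S ↔ b - a ∈ S := by
  rw [Set.image_add_right, Set.mem_preimage, sub_eq_add_neg]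

section BorderedSign

variable {F : Type*}

open Classical in
noncomputable def borderedSign (D : Set F) : Option F → ℤ
  | none => 1
  | some b => if b ∈ D then -1 else 1

theorem borderedSign_eq_one_or (D : Set F) (u : Option F) :
    borderedSign D u = 1 ∨ borderedSign D u = -1 := by
  cases u with
  | none => exact Or.inl rfl
  | some b => by_cases h : b ∈ D <;> simp [borderedSign, h]

open Classical in
theorem mulVec_borderedSign_apply [Fintype F] {ι : Type*} {A : Matrix ι (Option F) ℤ} {u : ι}
    {T : Set F} (hA : ∀ b, A u (some b) = if b ∈ T then 1 else -1) (D : Set F) :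
    (A *ᵥ borderedSign D) u =
      A u none + ∑ b, A u (some b) + 2 * D.ncard - 4 * (D ∩ T).ncard := by
  simp only [mulVec, dotProduct, Fintype.sum_option, borderedSign, mul_one, hA, sum_sign_mul_sign]
  ring

end BorderedSign

section Paley

variable {F : Type*} [Field F] [Fintype F] [DecidableEq F]

theorem quadraticChar_sum_sub (hF : ringChar F ≠ 2) (a : F) :
    ∑ b : F, quadraticChar F (b - a) = 0 :=
  (Fintype.sum_equiv (Equiv.subRight a) _ _ fun _ => rfl).trans (quadraticChar_sum_zero hF)

theorem quadraticChar_sum_mul_add (hF : ringChar F ≠ 2) (b : F) :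
    ∑ x : F, quadraticChar F x * quadraticChar F (x + b) =
      if b = 0 then (Fintype.card F : ℤ) - 1 else -1 := by
  set χ := quadraticChar F
  split_ifs with hb
  · have hsq (x : F) : χ x * χ x = 1 - if x = 0 then 1 else 0 := by
      split_ifs with hx
      · simp [χ, hx]
      · rw [← sq, quadraticChar_sq_one hx, sub_zero]
    simp [hb, hsq, sum_sub_distrib]
  · have hJ : jacobiSum χ χ = -χ (-1) := by
      simpa only [(quadraticChar_isQuadratic F).inv] using
        jacobiSum_nontrivial_inv (quadraticChar_ne_one hF)
    have hneg : χ (-1) ^ 2 = 1 := quadraticChar_sq_one (neg_ne_zero.2 one_ne_zero)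
    calc ∑ x : F, χ x * χ (x + b) = ∑ y : F, χ (-b * y) * χ (-b * y + b) :=
          (Fintype.sum_equiv (Equiv.mulLeft₀ (-b) (neg_ne_zero.2 hb)) _ _ fun _ => rfl).symm
      _ = ∑ y : F, χ (-1) * χ b ^ 2 * (χ y * χ (1 - y)) := by
          refine sum_congr rfl fun y _ => ?_
          rw [show -b * y = -1 * b * y by ring, show -1 * b * y + b = b * (1 - y) by ring]
          simp only [map_mul]
          ring
      _ = -1 := by
          rw [← mul_sum, ← jacobiSum, hJ, quadraticChar_sq_one hb]
          linear_combination -hneg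

variable (F) in
def paleyConference : Matrix (Option F) (Option F) ℤ
  | none, none => 0
  | none, some _ => 1
  | some _, none => 1
  | some a, some b => quadraticChar F (b - a)

theorem paleyConference_apply_self (u : Option F) : paleyConference F u u = 0 := by
  cases u <;> simp [paleyConference]

theorem paleyConference_apply_of_ne {u v : Option F} (h : u ≠ v) :
    paleyConference F u v = 1 ∨ paleyConference F u v = -1 := by
  match u, v with
  | none, none => exact absurd rfl h
  | none, some _ | some _, none => exact Or.inl rfl
  | some a, some b => exact quadraticChar_dichotomy (sub_ne_zero.2 fun hba => h (by rw [hba]))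

theorem paleyConference_transpose (h : IsSquare (-1 : F)) :
    (paleyConference F)ᵀ = paleyConference F := by
  have hχ : quadraticChar F (-1) = 1 := (quadraticChar_one_iff_isSquare (by simp)).2 h
  ext u v
  match u, v with
  | none, none | none, some _ | some _, none => rfl
  | some a, some b =>
    simp only [transpose_apply, paleyConference]
    rw [← neg_sub, neg_eq_neg_one_mul, map_mul, hχ, one_mul]

theorem paleyConference_mul_transpose (hF : ringChar F ≠ 2) :
    paleyConference F * (paleyConference F)ᵀ = (Fintype.card F : ℤ) • 1 := by
  ext u v
  simp only [mul_apply, transpose_apply, Fintype.sum_option, Matrix.smul_apply, smul_eq_mul,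
    one_apply]
  match u, v with
  | none, none => simp [paleyConference]
  | none, some a | some a, none =>
    simp [paleyConference, -quadraticChar_apply, quadraticChar_sum_sub hF]
  | some a, some a' =>
    have hshift : ∑ b : F, quadraticChar F (b - a) * quadraticChar F (b - a') =
        ∑ x : F, quadraticChar F x * quadraticChar F (x + (a - a')) :=
      Fintype.sum_equiv (Equiv.subRight a) _ _ fun b => by simp
    simp only [paleyConference, one_mul, hshift, quadraticChar_sum_mul_add hF, sub_eq_zero,
      Option.some_inj]
    split_ifs <;> ring

variable (F) in
def nonzeroSquares : Set F := {x | x ≠ 0 ∧ IsSquare x}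

open Classical in
theorem paleyConference_add_one_apply_some (a b : F) :
    (paleyConference F + 1) (some a) (some b) =
      if b ∈ (· + a) '' (nonzeroSquares F ∪ {0}) then 1 else -1 := by
  rw [mem_image_add_right_iff]
  simp only [Matrix.add_apply, one_apply, paleyConference, quadraticChar_apply, quadraticCharFun,
    nonzeroSquares, Option.some_inj, sub_eq_zero]
  by_cases h : b = a
  · simp [h]
  · by_cases hs : IsSquare (b - a) <;> simp [h, hs, Ne.symm h, sub_eq_zero]

open Classical in
theorem paleyConference_sub_one_apply_some (a b : F) :
    (paleyConference F - 1) (some a) (some b) =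
      if b ∈ (· + a) '' nonzeroSquares F then 1 else -1 := by
  rw [mem_image_add_right_iff]
  simp only [Matrix.sub_apply, one_apply, paleyConference, quadraticChar_apply, quadraticCharFun,
    nonzeroSquares, Option.some_inj, sub_eq_zero]
  by_cases h : b = a
  · simp [h]
  · by_cases hs : IsSquare (b - a) <;> simp [h, hs, Ne.symm h, sub_eq_zero]

open Classical in
theorem paleyConference_neg_sub_one_apply_some (a b : F) :
    (-paleyConference F - 1) (some a) (some b) =
      if b ∈ (· + a) '' (Set.univ \ (nonzeroSquares F ∪ {0})) then 1 else -1 := by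
  rw [mem_image_add_right_iff]
  simp only [Matrix.sub_apply, Matrix.neg_apply, one_apply, paleyConference, quadraticChar_apply,
    quadraticCharFun, nonzeroSquares, Option.some_inj, sub_eq_zero]
  by_cases h : b = a
  · simp [h]
  · by_cases hs : IsSquare (b - a) <;> simp [h, hs, Ne.symm h, sub_eq_zero]

variable (D₀ D₁ : Set F)

theorem conferenceDoubling_paleyConference_mulVec_inl_none :
    (conferenceDoubling (paleyConference F) *ᵥ Sum.elim (borderedSign D₀) (borderedSign D₁))
      (Sum.inl none) = 2 * Fintype.card F - 2 * D₀.ncard - 2 * D₁.ncard := by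
  rw [conferenceDoubling, fromBlocks_mulVec, Sum.elim_inl, Pi.add_apply, Sum.elim_comp_inl,
    Sum.elim_comp_inr,
    mulVec_borderedSign_apply (T := Set.univ) (fun b => by simp [paleyConference]),
    mulVec_borderedSign_apply (T := Set.univ) (fun b => by simp [paleyConference])]
  simp [paleyConference]
  ring

theorem conferenceDoubling_paleyConference_mulVec_inr_none :
    (conferenceDoubling (paleyConference F) *ᵥ Sum.elim (borderedSign D₀) (borderedSign D₁))
      (Sum.inr none) = 2 * D₁.ncard - 2 * D₀.ncard - 2 := by
  rw [conferenceDoubling, fromBlocks_mulVec, Sum.elim_inr, Pi.add_apply, Sum.elim_comp_inl,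
    Sum.elim_comp_inr,
    mulVec_borderedSign_apply (T := Set.univ) (fun b => by simp [paleyConference]),
    mulVec_borderedSign_apply (T := ∅) (fun b => by simp [paleyConference])]
  simp [paleyConference]
  ring

theorem conferenceDoubling_paleyConference_mulVec_inl_some (hF : ringChar F ≠ 2) (a : F) :
    (conferenceDoubling (paleyConference F) *ᵥ Sum.elim (borderedSign D₀) (borderedSign D₁))
      (Sum.inl (some a)) = 2 + 2 * D₀.ncard + 2 * D₁.ncard -
        4 * ((D₀ ∩ (· + a) '' (nonzeroSquares F ∪ {0})).ncard +
          (D₁ ∩ (· + a) '' nonzeroSquares F).ncard) := by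
  rw [conferenceDoubling, fromBlocks_mulVec, Sum.elim_inl, Pi.add_apply, Sum.elim_comp_inl,
    Sum.elim_comp_inr, mulVec_borderedSign_apply (paleyConference_add_one_apply_some a),
    mulVec_borderedSign_apply (paleyConference_sub_one_apply_some a)]
  simp [-quadraticChar_apply, paleyConference, sum_add_distrib, sum_sub_distrib, one_apply,
    quadraticChar_sum_sub hF]
  ring

theorem conferenceDoubling_paleyConference_mulVec_inr_some (a : F) :
    (conferenceDoubling (paleyConference F) *ᵥ Sum.elim (borderedSign D₀) (borderedSign D₁))
      (Sum.inr (some a)) = 2 * D₀.ncard + 2 * D₁.ncard - 2 -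
        4 * ((D₀ ∩ (· + a) '' nonzeroSquares F).ncard +
          (D₁ ∩ (· + a) '' (Set.univ \ (nonzeroSquares F ∪ {0}))).ncard) := by
  rw [conferenceDoubling, fromBlocks_mulVec, Sum.elim_inr, Pi.add_apply, Sum.elim_comp_inl,
    Sum.elim_comp_inr, mulVec_borderedSign_apply (paleyConference_sub_one_apply_some a),
    mulVec_borderedSign_apply (paleyConference_neg_sub_one_apply_some a)]
  simp [paleyConference, sum_sub_distrib, one_apply]
  ring

theorem isHadamard_conferenceDoubling_paleyConference (hF : Fintype.card F % 4 = 1) :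
    IsHadamard (conferenceDoubling (paleyConference F)) := by
  have hchar : ringChar F ≠ 2 := fun h => by
    have := FiniteField.even_card_of_char_two h
    omega
  have hneg : IsSquare (-1 : F) := FiniteField.isSquare_neg_one_iff.2 (by omega)
  refine isHadamard_conferenceDoubling (paleyConference_transpose hneg)
    paleyConference_apply_self (fun _ _ => paleyConference_apply_of_ne) ?_
  simpa [paleyConference_transpose hneg] using paleyConference_mul_transpose hchar

theorem abs_conferenceDoubling_paleyConference_mulVec {m : ℕ}
    (hF : Fintype.card F = 2 * m ^ 2 + 2 * m + 1)
    (hD₀ : D₀.ncard = m ^ 2) (hD₁ : D₁.ncard = m ^ 2 + m + 1)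
    (hint1 : ∀ a : F,
      (D₀ ∩ (· + a) '' (nonzeroSquares F ∪ {0})).ncard +
          (D₁ ∩ (· + a) '' nonzeroSquares F).ncard ∈
        ({m ^ 2, m ^ 2 + 1, m ^ 2 + m + 1, m ^ 2 + m + 2} : Set ℕ))
    (hint2 : ∀ a : F,
      (D₀ ∩ (· + a) '' nonzeroSquares F).ncard +
          (D₁ ∩ (· + a) '' (Set.univ \ (nonzeroSquares F ∪ {0}))).ncard ∈
        ({m ^ 2 - 1, m ^ 2, m ^ 2 + m, m ^ 2 + m + 1} : Set ℕ))
    (i : Option F ⊕ Option F) :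
    |(conferenceDoubling (paleyConference F) *ᵥ
        Sum.elim (borderedSign D₀) (borderedSign D₁)) i| ∈
      ({2 * (m : ℤ), 2 * (m : ℤ) + 4} : Set ℤ) := by
  have hchar : ringChar F ≠ 2 := fun h => by
    have := FiniteField.even_card_of_char_two h
    omega
  rw [Set.mem_insert_iff, Set.mem_singleton_iff, abs_eq (by positivity),
    abs_eq (by positivity)]
  rcases i with (_ | a) | (_ | a)
  · rw [conferenceDoubling_paleyConference_mulVec_inl_none, hD₀, hD₁, hF]
    omega
  · have h := hint1 a
    simp only [Set.mem_insert_iff, Set.mem_singleton_iff] at h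
    rw [conferenceDoubling_paleyConference_mulVec_inl_some _ _ hchar, hD₀, hD₁]
    omega
  · rw [conferenceDoubling_paleyConference_mulVec_inr_none, hD₀, hD₁]
    omega
  · have h := hint2 a
    simp only [Set.mem_insert_iff, Set.mem_singleton_iff] at h
    rw [conferenceDoubling_paleyConference_mulVec_inr_some, hD₀, hD₁]
    omega

end Paley

theorem stmt_14_general (m : ℕ)
    (F : Type) [Field F] [Fintype F] (hF : Fintype.card F = 2 * m ^ 2 + 2 * m + 1)
    (C : Set F) (hC : C = {x : F | x ≠ 0 ∧ IsSquare x})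
    (D₀ D₁ : Set F) (hD₀ : D₀.ncard = m ^ 2) (hD₁ : D₁.ncard = m ^ 2 + m + 1)
    (hint1 : ∀ j : F,
      (D₀ ∩ ((fun x => x + j) '' (C ∪ {0}))).ncard + (D₁ ∩ ((fun x => x + j) '' C)).ncard ∈
        ({m ^ 2, m ^ 2 + 1, m ^ 2 + m + 1, m ^ 2 + m + 2} : Set ℕ))
    (hint2 : ∀ j : F,
      (D₀ ∩ ((fun x => x + j) '' C)).ncard +
          (D₁ ∩ ((fun x => x + j) '' (Set.univ \ (C ∪ {0})))).ncard ∈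
        ({m ^ 2 - 1, m ^ 2, m ^ 2 + m, m ^ 2 + m + 1} : Set ℕ)) :
    ∃ H : Matrix (Fin (4 * (m ^ 2 + m + 1))) (Fin (4 * (m ^ 2 + m + 1))) ℤ,
      (∀ i j, H i j = 1 ∨ H i j = -1) ∧
      H * H.transpose = ((4 * (m ^ 2 + m + 1) : ℕ) : ℤ) • (1 : Matrix _ _ ℤ) ∧
      (∀ i, (∑ j, H i j) = 2 * (m : ℤ) ∨ (∑ j, H i j) = 2 * (m : ℤ) + 4) := by
  classical
  have hq : Fintype.card F % 4 = 1 := by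
    obtain ⟨k, hk⟩ := Nat.even_mul_succ_self m
    have : Fintype.card F = 4 * k + 1 := by rw [hF]; nlinarith [hk]
    omega
  obtain ⟨H, hH, hsum⟩ :=
    (isHadamard_conferenceDoubling_paleyConference hq).exists_sum_eq_abs_mulVec
      (c := Sum.elim (borderedSign D₀) (borderedSign D₁))
      (Sum.forall.2 ⟨borderedSign_eq_one_or D₀, borderedSign_eq_one_or D₁⟩)
  have hcard : Fintype.card (Option F ⊕ Option F) = 4 * (m ^ 2 + m + 1) := by
    simp only [Fintype.card_sum, Fintype.card_option, hF]
    ring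
  subst hC
  refine hH.exists_fin hcard (P := (· ∈ ({2 * (m : ℤ), 2 * (m : ℤ) + 4} : Set ℤ)))
    fun i => ?_
  rw [hsum]
  exact abs_conferenceDoubling_paleyConference_mulVec D₀ D₁ hF hD₀ hD₁ hint1 hint2 i

/-- STATEMENT 13: Suitable intersection conditions on a pair `D₀, D₁ ⊆ F_q`,
`q = 2m²+2m+1`, yield a biregular Hadamard matrix of order `4(m²+m+1)` with row sums
`2m` or `2m+4`. -/
theorem stmt_14 (m : ℕ) (hm : 0 < m)
    (F : Type) [Field F] [Fintype F] (hF : Fintype.card F = 2 * m ^ 2 + 2 * m + 1)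
    (C : Set F) (hC : C = {x : F | x ≠ 0 ∧ IsSquare x})
    (D₀ D₁ : Set F) (hD₀ : D₀.ncard = m ^ 2) (hD₁ : D₁.ncard = m ^ 2 + m + 1)
    (hint1 : ∀ j : F,
      (D₀ ∩ ((fun x => x + j) '' (C ∪ {0}))).ncard + (D₁ ∩ ((fun x => x + j) '' C)).ncard ∈
        ({m ^ 2, m ^ 2 + 1, m ^ 2 + m + 1, m ^ 2 + m + 2} : Set ℕ))
    (hint2 : ∀ j : F,
      (D₀ ∩ ((fun x => x + j) '' C)).ncard +
          (D₁ ∩ ((fun x => x + j) '' (Set.univ \ (C ∪ {0})))).ncard ∈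
        ({m ^ 2 - 1, m ^ 2, m ^ 2 + m, m ^ 2 + m + 1} : Set ℕ)) :
    ∃ H : Matrix (Fin (4 * (m ^ 2 + m + 1))) (Fin (4 * (m ^ 2 + m + 1))) ℤ,
      (∀ i j, H i j = 1 ∨ H i j = -1) ∧
      H * H.transpose = ((4 * (m ^ 2 + m + 1) : ℕ) : ℤ) • (1 : Matrix _ _ ℤ) ∧
      (∀ i, (∑ j, H i j) = 2 * (m : ℤ) ∨ (∑ j, H i j) = 2 * (m : ℤ) + 4) :=
  stmt_14_general m F hF C hC D₀ D₁ hD₀ hD₁ hint1 hint2
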